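/- Let u and v be time-global classical solutions of problem (B) and let T > 0 be such that v(x,t) < u(x,t) < v(x,t+T) for all x ∈ [-1,1], t > 0. Assume v(·,t) is even and convex in x for each t (so v_x(x,t) ≥ 0 for x ∈ [0,1]), and that v(x,s+T) ≤ φ0(x) + (π/2)·T + v(0,s) for all x ∈ (-1,1), s > 0, where φ0(x) := -(2/π)·ln(cos(πx/2)). Then for every ε ∈ (0,1/2) and every t > 0: min over x ∈ [1-2ε, 1-ε] of |u_x(x,t)| < M1 and min over x ∈ [ε-1, 2ε-1] of |u_x(x,t)| < M1, where M1 := ε^{-1}·(φ0(1-ε) + (π/2)·T). -/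
import Mathlib


open Real

/-- Partial derivative in `x` of a function `u(x,t)`. -/
noncomputable def ux (u : ℝ → ℝ → ℝ) (x t : ℝ) : ℝ := deriv (fun y => u y t) x

/-- Second partial derivative in `x` of a function `u(x,t)`. -/
noncomputable def uxx (u : ℝ → ℝ → ℝ) (x t : ℝ) : ℝ := deriv (fun y => ux u y t) x

/-- Partial derivative in `t` of a function `u(x,t)`. -/
noncomputable def ut (u : ℝ → ℝ → ℝ) (x t : ℝ) : ℝ := deriv (fun s => u x s) t

/-- A time-global classical solution of problem (B) (with some prescribed
initial data): `u` and `u_x` are continuous on `[-1,1] × [0,∞)`, `u` is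
`C^{2,1}` in `(-1,1) × (0,∞)` where it satisfies `u_t = u_xx/(1+u_x²)`, with
boundary conditions `u_x(±1,t) = ±u(±1,t)` for `t > 0`. -/
def IsGlobalSolB (u : ℝ → ℝ → ℝ) : Prop :=
  ContinuousOn (fun p : ℝ × ℝ => u p.1 p.2) (Set.Icc (-1 : ℝ) 1 ×ˢ Set.Ici (0 : ℝ)) ∧
  ContinuousOn (fun p : ℝ × ℝ => ux u p.1 p.2) (Set.Icc (-1 : ℝ) 1 ×ˢ Set.Ici (0 : ℝ)) ∧
  (∀ t > (0 : ℝ), ∀ x ∈ Set.Ioo (-1 : ℝ) 1,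
    DifferentiableAt ℝ (fun y => u y t) x ∧
    DifferentiableAt ℝ (fun y => ux u y t) x ∧
    DifferentiableAt ℝ (fun s => u x s) t ∧
    ut u x t = uxx u x t / (1 + ux u x t ^ 2)) ∧
  (∀ t > (0 : ℝ), ux u 1 t = u 1 t ∧ ux u (-1) t = - u (-1) t)


private lemma phi0_aux_mono {a b : ℝ} (h0 : 0 ≤ a) (hab : a ≤ b) (hb : b < 1) :
    -(2 / π) * Real.log (Real.cos (π * a / 2)) ≤ -(2 / π) * Real.log (Real.cos (π * b / 2)) := by
  have hπ := Real.pi_pos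
  have hca : 0 < Real.cos (π * a / 2) := by
    apply Real.cos_pos_of_mem_Ioo
    constructor <;> nlinarith
  have hcb : 0 < Real.cos (π * b / 2) := by
    apply Real.cos_pos_of_mem_Ioo
    constructor <;> nlinarith
  have hle : Real.cos (π * b / 2) ≤ Real.cos (π * a / 2) :=
    Real.cos_le_cos_of_nonneg_of_le_pi (by nlinarith) (by nlinarith) (by nlinarith)
  have hlog : Real.log (Real.cos (π * b / 2)) ≤ Real.log (Real.cos (π * a / 2)) :=
    Real.log_le_log hcb hle
  have h2π : 0 < 2 / π := by positivity
  nlinarith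

/-- MVT band lemma: if `|u b t - u a t| < C` then some point of `[a,b]` has
`|u_x| < C / (b - a)`. -/
private lemma band_lemma (u : ℝ → ℝ → ℝ) (t a b C : ℝ) (hab : a < b)
    (hcont : ContinuousOn (fun y => u y t) (Set.Icc a b))
    (hdiff : ∀ x ∈ Set.Ioo a b, DifferentiableAt ℝ (fun y => u y t) x)
    (hbound : |u b t - u a t| < C) :
    ∃ x ∈ Set.Icc a b, |ux u x t| < C / (b - a) := by
  obtain ⟨c, hc, hderiv⟩ := exists_deriv_eq_slope (fun y => u y t) hab hcont
    (fun x hx => (hdiff x hx).differentiableWithinAt)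
  refine ⟨c, ⟨hc.1.le, hc.2.le⟩, ?_⟩
  have hba : 0 < b - a := by linarith
  rw [ux, hderiv, abs_div, abs_of_pos hba]
  exact (div_lt_div_iff_of_pos_right hba).mpr hbound

/-- interior smallness of the gradient at some point of each
band near the boundary. If `v < u < v(·, ·+T)`, `v(·,t)` is even and convex,
and `v(x,s+T) ≤ φ0(x) + (π/2)T + v(0,s)` with `φ0(x) = -(2/π)·ln(cos(πx/2))`,
then for every `ε ∈ (0,1/2)` and `t > 0`, the minimum of `|u_x(·,t)|` over
`[1-2ε, 1-ε]` and over `[ε-1, 2ε-1]` is `< M1 := ε⁻¹(φ0(1-ε) + (π/2)T)`. -/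
theorem stmt_16 (u v : ℝ → ℝ → ℝ) (T : ℝ) (hT : 0 < T)
    (hu : IsGlobalSolB u) (hv : IsGlobalSolB v)
    (horder : ∀ x ∈ Set.Icc (-1 : ℝ) 1, ∀ t > (0 : ℝ),
      v x t < u x t ∧ u x t < v x (t + T))
    (hveven : ∀ x ∈ Set.Icc (-1 : ℝ) 1, ∀ t > (0 : ℝ), v (-x) t = v x t)
    (hvconvex : ∀ t > (0 : ℝ), ConvexOn ℝ (Set.Icc (-1 : ℝ) 1) (fun x => v x t))
    (hvx : ∀ t > (0 : ℝ), ∀ x ∈ Set.Icc (0 : ℝ) 1, 0 ≤ ux v x t)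
    (φ0 : ℝ → ℝ) (hφ0 : ∀ x : ℝ, φ0 x = -(2 / π) * Real.log (Real.cos (π * x / 2)))
    (hvbound : ∀ s > (0 : ℝ), ∀ x ∈ Set.Ioo (-1 : ℝ) 1,
      v x (s + T) ≤ φ0 x + (π / 2) * T + v 0 s) :
    ∀ ε ∈ Set.Ioo (0 : ℝ) (1 / 2), ∀ t > (0 : ℝ),
      (∃ x ∈ Set.Icc (1 - 2 * ε) (1 - ε),
        |ux u x t| < ε⁻¹ * (φ0 (1 - ε) + (π / 2) * T)) ∧
      (∃ x ∈ Set.Icc (ε - 1) (2 * ε - 1),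
        |ux u x t| < ε⁻¹ * (φ0 (1 - ε) + (π / 2) * T)) := by
  intro ε hε t ht
  obtain ⟨hε0, hε2⟩ := hε
  have hπ := Real.pi_pos
  have ht0 : (0:ℝ) ≤ t := ht.le
  -- v 0 t ≤ v x t for x ∈ [-1,1]
  have hvmin : ∀ x ∈ Set.Icc (-1:ℝ) 1, v 0 t ≤ v x t := by
    intro x hx
    have hmx : -x ∈ Set.Icc (-1:ℝ) 1 := ⟨by linarith [hx.2], by linarith [hx.1]⟩
    have key := (hvconvex t ht).2 hx hmx (by norm_num : (0:ℝ) ≤ 1/2)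
      (by norm_num : (0:ℝ) ≤ 1/2) (by norm_num)
    simp only [smul_eq_mul] at key
    have h0 : (1/2:ℝ) * x + (1/2) * (-x) = 0 := by ring
    rw [h0] at key
    have he := hveven x hx t ht
    linarith
  -- pointwise bounds for u on (-1,1)
  have hub : ∀ x ∈ Set.Ioo (-1:ℝ) 1, v 0 t < u x t ∧ u x t < φ0 x + (π/2) * T + v 0 t := by
    intro x hx
    have hx' : x ∈ Set.Icc (-1:ℝ) 1 := ⟨hx.1.le, hx.2.le⟩
    have h1 := (horder x hx' t ht).1
    have h2 := (horder x hx' t ht).2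
    have h3 := hvbound t ht x hx
    have h4 := hvmin x hx'
    exact ⟨lt_of_le_of_lt h4 h1, lt_of_lt_of_le h2 h3⟩
  -- φ0 monotonicity facts
  have hmono : φ0 (1 - 2*ε) ≤ φ0 (1 - ε) := by
    rw [hφ0, hφ0]
    exact phi0_aux_mono (by linarith) (by linarith) (by linarith)
  have heven : ∀ y : ℝ, φ0 (-y) = φ0 y := by
    intro y
    rw [hφ0, hφ0]
    rw [show π * -y / 2 = -(π * y / 2) by ring, Real.cos_neg]
  -- continuity of u(·,t)
  have hcont : ∀ a b : ℝ, Set.Icc a b ⊆ Set.Icc (-1:ℝ) 1 →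
      ContinuousOn (fun y => u y t) (Set.Icc a b) := by
    intro a b hsub
    have : ContinuousOn (fun y : ℝ => (fun p : ℝ × ℝ => u p.1 p.2) (y, t)) (Set.Icc a b) := by
      apply hu.1.comp (by fun_prop)
      intro y hy
      exact ⟨hsub hy, ht0⟩
    exact this
  have hdiff : ∀ x ∈ Set.Ioo (-1:ℝ) 1, DifferentiableAt ℝ (fun y => u y t) x :=
    fun x hx => (hu.2.2.1 t ht x hx).1
  constructor
  · -- right band [1-2ε, 1-ε]
    have hab : (1 - 2*ε : ℝ) < 1 - ε := by linarith
    have hsubI : Set.Icc (1-2*ε) (1-ε) ⊆ Set.Icc (-1:ℝ) 1 := by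
      intro y hy; exact ⟨by linarith [hy.1], by linarith [hy.2]⟩
    have ha : (1 - 2*ε : ℝ) ∈ Set.Ioo (-1:ℝ) 1 := ⟨by linarith, by linarith⟩
    have hb : (1 - ε : ℝ) ∈ Set.Ioo (-1:ℝ) 1 := ⟨by linarith, by linarith⟩
    have hbound : |u (1-ε) t - u (1-2*ε) t| < φ0 (1-ε) + (π/2) * T := by
      rw [abs_lt]
      have h1 := hub _ ha
      have h2 := hub _ hb
      constructor <;> [skip; skip] <;> nlinarith [h1.1, h1.2, h2.1, h2.2]
    obtain ⟨x, hx, hlt⟩ := band_lemma u t (1-2*ε) (1-ε) _ hab (hcont _ _ hsubI)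
      (fun x hx => hdiff x ⟨by linarith [hx.1], by linarith [hx.2]⟩) hbound
    refine ⟨x, hx, ?_⟩
    have : (1 - ε) - (1 - 2*ε) = ε := by ring
    rw [this] at hlt
    rwa [div_eq_inv_mul] at hlt
  · -- left band [ε-1, 2ε-1]
    have hab : (ε - 1 : ℝ) < 2*ε - 1 := by linarith
    have hsubI : Set.Icc (ε-1) (2*ε-1) ⊆ Set.Icc (-1:ℝ) 1 := by
      intro y hy; exact ⟨by linarith [hy.1], by linarith [hy.2]⟩
    have ha : (ε - 1 : ℝ) ∈ Set.Ioo (-1:ℝ) 1 := ⟨by linarith, by linarith⟩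
    have hb : (2*ε - 1 : ℝ) ∈ Set.Ioo (-1:ℝ) 1 := ⟨by linarith, by linarith⟩
    have he1 : φ0 (ε - 1) = φ0 (1 - ε) := by
      rw [show (ε - 1 : ℝ) = -(1 - ε) by ring, heven]
    have he2 : φ0 (2*ε - 1) = φ0 (1 - 2*ε) := by
      rw [show (2*ε - 1 : ℝ) = -(1 - 2*ε) by ring, heven]
    have hbound : |u (2*ε-1) t - u (ε-1) t| < φ0 (1-ε) + (π/2) * T := by
      rw [abs_lt]
      have h1 := hub _ ha
      have h2 := hub _ hb
      rw [he1] at h1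
      rw [he2] at h2
      constructor <;> nlinarith [h1.1, h1.2, h2.1, h2.2]
    obtain ⟨x, hx, hlt⟩ := band_lemma u t (ε-1) (2*ε-1) _ hab (hcont _ _ hsubI)
      (fun x hx => hdiff x ⟨by linarith [hx.1], by linarith [hx.2]⟩) hbound
    refine ⟨x, hx, ?_⟩
    have : (2*ε - 1) - (ε - 1) = ε := by ring
    rw [this] at hlt
    rwa [div_eq_inv_mul] at hlt
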